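/- Let k be a field, X a topological space, and F a presheaf of k-vector spaces on the open subsets of X (a contravariant functor from the poset of open subsets of X to k-vector spaces, with restriction maps s ↦ s|_V for V ⊆ U). Assume: (1) F(∅) = 0; (2) for all open subsets U, V of X, the sequence 0 → F(U ∪ V) → F(U) ⊕ F(V) → F(U ∩ V), where the first map is s ↦ (s|_U, s|_V) and the second map is (t, u) ↦ t|_{U∩V} − u|_{U∩V}, is exact (the first map is injective and its image equals the kernel of the second map). Let U be an open subset of X whose closure is compact, and let S be a cf-covering of U. Then the sequence 0 → F(U) →^φ ∏_{V ∈ S} F(V) →^ψ ∏_{(V', V'') ∈ S × S} F(V' ∩ V'') is exact, where φ(s) = (s|_V)_{V ∈ S} and ψ((t_V)_{V ∈ S}) = (t_{V'}|_{V'∩V''} − t_{V''}|_{V'∩V''})_{(V', V'') ∈ S × S}; that is, φ is injective and the image of φ equals the kernel of ψ. -/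
import Mathlib


open TopologicalSpace

/-- `S` is a cf-covering of the open set `U`: it is a family of open subsets of
`U` such that for every compact `K ⊆ X` there is a finite subfamily `T ⊆ S`
with `K ∩ U = K ∩ ⋃_{V ∈ T} V`. -/
def IsCfCovering {X : Type*} [TopologicalSpace X] (U : Opens X) (S : Set (Opens X)) : Prop :=
  (∀ V ∈ S, V ≤ U) ∧
  ∀ K : Set X, IsCompact K → ∃ T : Set (Opens X),
    T ⊆ S ∧ T.Finite ∧ K ∩ (U : Set X) = K ∩ ⋃ V ∈ T, (V : Set X)


section Aux

variable {k : Type*} [Field k] {X : Type*} [TopologicalSpace X]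
  (F : Opens X → Type*) [∀ U, AddCommGroup (F U)] [∀ U, Module k (F U)]
  (res : ∀ {U V : Opens X}, V ≤ U → F U →ₗ[k] F V)
  (res_id : ∀ (U : Opens X) (s : F U), res (le_refl U) s = s)
  (res_comp : ∀ {U V W : Opens X} (hWV : W ≤ V) (hVU : V ≤ U) (s : F U),
      res hWV (res hVU s) = res (le_trans hWV hVU) s)

include res_id res_comp

theorem myPairInj'
    (hpair_inj : ∀ U V : Opens X,
      Function.Injective (fun s : F (U ⊔ V) =>
        (res le_sup_left s, res le_sup_right s)))
    (A B W : Opens X) (hW : W ≤ A ⊔ B) (hA : A ≤ W) (hB : B ≤ W)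
    (s : F W) (h1 : res hA s = 0) (h2 : res hB s = 0) : s = 0 := by
  set s' : F (A ⊔ B) := res (sup_le hA hB) s with hs'
  have e1 : res le_sup_left s' = res hA s := res_comp le_sup_left (sup_le hA hB) s
  have e2 : res le_sup_right s' = res hB s := res_comp le_sup_right (sup_le hA hB) s
  have hz : s' = 0 := by
    apply hpair_inj A B
    show (res le_sup_left s', res le_sup_right s') =
      (res le_sup_left (0 : F (A ⊔ B)), res le_sup_right (0 : F (A ⊔ B)))
    rw [e1, e2, h1, h2, map_zero, map_zero]
  have : res hW s' = res (le_refl W) s := res_comp hW (sup_le hA hB) s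
  rw [hz, map_zero] at this
  rw [← res_id W s, ← this]

theorem myPairKer'
    (hpair_ker : ∀ (U V : Opens X) (t : F U) (u : F V),
      res (inf_le_left : U ⊓ V ≤ U) t - res (inf_le_right : U ⊓ V ≤ V) u = 0 ↔
      ∃ s : F (U ⊔ V), res le_sup_left s = t ∧ res le_sup_right s = u)
    (A B W : Opens X) (hW : W ≤ A ⊔ B) (hA : A ≤ W) (hB : B ≤ W)
    (t : F A) (u : F B)
    (h : res (inf_le_left : A ⊓ B ≤ A) t - res (inf_le_right : A ⊓ B ≤ B) u = 0) :
    ∃ s : F W, res hA s = t ∧ res hB s = u := by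
  obtain ⟨s₀, hl, hr⟩ := (hpair_ker A B t u).mp h
  refine ⟨res hW s₀, ?_, ?_⟩
  · have := res_comp hA hW s₀
    rw [this]; exact hl
  · have := res_comp hB hW s₀
    rw [this]; exact hr

theorem myAuxInj
    (hempty : ∀ s : F ⊥, s = 0)
    (hpair_inj : ∀ U V : Opens X,
      Function.Injective (fun s : F (U ⊔ V) =>
        (res le_sup_left s, res le_sup_right s)))
    (T : Finset (Opens X)) :
    ∀ (W : Opens X), W ≤ T.sup id →
      ∀ s : F W, (∀ V ∈ T, res (inf_le_left : W ⊓ V ≤ W) s = 0) → s = 0 := by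
  classical
  induction T using Finset.induction_on with
  | empty =>
    intro W hW s _
    have hWb : W ≤ ⊥ := by simpa using hW
    have h1 : res hWb (res (bot_le : (⊥:Opens X) ≤ W) s) = res (le_refl W) s :=
      res_comp hWb bot_le s
    have h2 : res (bot_le : (⊥:Opens X) ≤ W) s = 0 := hempty _
    rw [h2, map_zero] at h1
    rw [← res_id W s, ← h1]
  | @insert a T' ha ih =>
    intro W hW s hs
    have hW' : W ≤ a ⊔ T'.sup id := by simpa using hW
    have hcov : W ≤ (W ⊓ a) ⊔ (W ⊓ T'.sup id) := by
      rw [← inf_sup_left]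
      exact le_inf le_rfl hW'
    refine myPairInj' F res res_id res_comp hpair_inj (W ⊓ a) (W ⊓ T'.sup id) W hcov
      inf_le_left inf_le_left s ?_ ?_
    · exact hs a (Finset.mem_insert_self a T')
    · refine ih (W ⊓ T'.sup id) inf_le_right (res inf_le_left s) ?_
      intro V hV
      have e1 : res (inf_le_left : (W ⊓ T'.sup id) ⊓ V ≤ W ⊓ T'.sup id)
          (res (inf_le_left : W ⊓ T'.sup id ≤ W) s)
          = res (le_trans inf_le_left inf_le_left) s := res_comp _ _ s
      have hle : (W ⊓ T'.sup id) ⊓ V ≤ W ⊓ V :=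
        le_inf (le_trans inf_le_left inf_le_left) inf_le_right
      have e2 : res hle (res (inf_le_left : W ⊓ V ≤ W) s)
          = res (le_trans hle inf_le_left) s := res_comp _ _ s
      rw [hs V (Finset.mem_insert_of_mem hV), map_zero] at e2
      rw [e1, ← e2]

theorem myAuxGlue
    (hempty : ∀ s : F ⊥, s = 0)
    (hpair_inj : ∀ U V : Opens X,
      Function.Injective (fun s : F (U ⊔ V) =>
        (res le_sup_left s, res le_sup_right s)))
    (hpair_ker : ∀ (U V : Opens X) (t : F U) (u : F V),
      res (inf_le_left : U ⊓ V ≤ U) t - res (inf_le_right : U ⊓ V ≤ V) u = 0 ↔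
      ∃ s : F (U ⊔ V), res le_sup_left s = t ∧ res le_sup_right s = u)
    (T : Finset (Opens X)) :
    ∀ (t : ∀ V ∈ T, F V),
      (∀ V hV V' hV', res (inf_le_left : V ⊓ V' ≤ V) (t V hV) -
          res (inf_le_right : V ⊓ V' ≤ V') (t V' hV') = 0) →
      ∃ s : F (T.sup id), ∀ V (hV : V ∈ T) (hVW : V ≤ T.sup id), res hVW s = t V hV := by
  classical
  induction T using Finset.induction_on with
  | empty =>
    exact fun t _ => ⟨0, fun V hV _ => absurd hV (Finset.notMem_empty V)⟩
  | @insert a T' ha ih =>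
    intro t hcompat
    set B := T'.sup id with hB
    obtain ⟨s', hs'⟩ := ih (fun V hV => t V (Finset.mem_insert_of_mem hV))
      (fun V hV V' hV' => hcompat V _ V' _)
    have hsupeq : (insert a T').sup id = a ⊔ B := by simp [hB]
    have hAW : a ≤ (insert a T').sup id := Finset.le_sup (f := id) (Finset.mem_insert_self a T')
    have hBW : B ≤ (insert a T').sup id := by
      rw [hsupeq]; exact le_sup_right
    -- compatibility of t a with s' on a ⊓ B
    have hd : res (inf_le_left : a ⊓ B ≤ a) (t a (Finset.mem_insert_self a T')) -
        res (inf_le_right : a ⊓ B ≤ B) s' = 0 := by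
      refine myAuxInj F res res_id res_comp hempty hpair_inj T' (a ⊓ B) inf_le_right _ ?_
      intro V hV
      rw [map_sub]
      have hVB : V ≤ B := Finset.le_sup (f := id) hV
      have hle1 : (a ⊓ B) ⊓ V ≤ a ⊓ V := le_inf (le_trans inf_le_left inf_le_left) inf_le_right
      have e1 : res (inf_le_left : (a ⊓ B) ⊓ V ≤ a ⊓ B)
          (res (inf_le_left : a ⊓ B ≤ a) (t a _)) = res (le_trans inf_le_left inf_le_left)
          (t a (Finset.mem_insert_self a T')) := res_comp _ _ _
      have e2 : res (inf_le_left : (a ⊓ B) ⊓ V ≤ a ⊓ B)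
          (res (inf_le_right : a ⊓ B ≤ B) s') = res (le_trans inf_le_left inf_le_right) s' :=
        res_comp _ _ _
      have e3 : res (le_trans inf_le_left inf_le_right : (a ⊓ B) ⊓ V ≤ B) s'
          = res (inf_le_right : (a ⊓ B) ⊓ V ≤ V) (res hVB s') := by
        rw [res_comp]
      rw [e1, e2, e3, hs' V hV hVB]
      -- now goal: res _ (t a _) - res _ (res _ (t V _)) = 0 on (a⊓B)⊓V,
      have hc := hcompat a (Finset.mem_insert_self a T') V (Finset.mem_insert_of_mem hV)
      have := congrArg (res hle1) hc
      rw [map_sub, map_zero, res_comp, res_comp] at this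
      exact this
    obtain ⟨s, hsa, hsB⟩ := myPairKer' F res res_id res_comp hpair_ker a B ((insert a T').sup id)
      (le_of_eq hsupeq) hAW hBW (t a (Finset.mem_insert_self a T')) s' hd
    refine ⟨s, ?_⟩
    intro V hV hVW
    rcases Finset.mem_insert.mp hV with h | h
    · subst h; exact hsa
    · have hVB : V ≤ B := Finset.le_sup (f := id) h
      have e : res hVB (res hBW s) = res (le_trans hVB hBW) s := res_comp _ _ _
      rw [hsB, hs' V h hVB] at e
      exact e.symm

end Aux


/-- Let `F` be a presheaf of `k`-vector spaces on the open subsets of a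
topological space `X` with `F(∅) = 0` and such that for every pair of open sets
the Mayer–Vietoris type sequence `0 → F(U ∪ V) → F(U) ⊕ F(V) → F(U ∩ V)` is
exact.  If `U` is a relatively compact open subset and `S` is a cf-covering of
`U`, then the sequence `0 → F(U) →φ ∏_{V ∈ S} F(V) →ψ ∏_{(V',V'') ∈ S×S} F(V' ∩ V'')`
is exact: `φ` is injective and the image of `φ` equals the kernel of `ψ`. -/
theorem sheaf_criterion_cf_covering {k : Type*} [Field k] {X : Type*} [TopologicalSpace X]
    (F : Opens X → Type*) [∀ U, AddCommGroup (F U)] [∀ U, Module k (F U)]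
    (res : ∀ {U V : Opens X}, V ≤ U → F U →ₗ[k] F V)
    (res_id : ∀ (U : Opens X) (s : F U), res (le_refl U) s = s)
    (res_comp : ∀ {U V W : Opens X} (hWV : W ≤ V) (hVU : V ≤ U) (s : F U),
      res hWV (res hVU s) = res (le_trans hWV hVU) s)
    (hempty : ∀ s : F ⊥, s = 0)
    (hpair_inj : ∀ U V : Opens X,
      Function.Injective (fun s : F (U ⊔ V) =>
        (res le_sup_left s, res le_sup_right s)))
    (hpair_ker : ∀ (U V : Opens X) (t : F U) (u : F V),
      res (inf_le_left : U ⊓ V ≤ U) t - res (inf_le_right : U ⊓ V ≤ V) u = 0 ↔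
      ∃ s : F (U ⊔ V), res le_sup_left s = t ∧ res le_sup_right s = u)
    (U : Opens X) (hUc : IsCompact (closure (U : Set X)))
    (S : Set (Opens X)) (hS : IsCfCovering U S) :
    Function.Injective (fun s : F U => fun V : S => res (hS.1 V.1 V.2) s) ∧
    ∀ t : ∀ V : S, F V.1,
      (∀ V' V'' : S,
        res (inf_le_left : V'.1 ⊓ V''.1 ≤ V'.1) (t V') -
          res (inf_le_right : V'.1 ⊓ V''.1 ≤ V''.1) (t V'') = 0) ↔
      ∃ s : F U, ∀ V : S, res (hS.1 V.1 V.2) s = t V := by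
  classical
  obtain ⟨hle, hcf⟩ := hS
  obtain ⟨T₀, hT₀S, hT₀fin, hK⟩ := hcf (closure (U : Set X)) hUc
  set T : Finset (Opens X) := hT₀fin.toFinset with hT
  have hmemS : ∀ V ∈ T, V ∈ S := fun V hV => hT₀S (hT₀fin.mem_toFinset.mp hV)
  have hUsup : U ≤ T.sup id := by
    intro x hx
    have hx' : x ∈ closure (U : Set X) ∩ (U : Set X) := ⟨subset_closure hx, hx⟩
    rw [hK] at hx'
    obtain ⟨V, hVT₀, hxV⟩ := Set.mem_iUnion₂.mp hx'.2
    exact Finset.le_sup (f := id) (hT₀fin.mem_toFinset.mpr hVT₀) hxV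
  constructor
  · intro s₁ s₂ h
    have hres : ∀ V : S, res (hle V.1 V.2) s₁ = res (hle V.1 V.2) s₂ := fun V => congrFun h V
    have hd : s₁ - s₂ = 0 := by
      refine myAuxInj F res res_id res_comp hempty hpair_inj T U hUsup (s₁ - s₂) ?_
      intro V hV
      rw [map_sub]
      have hVU : V ≤ U := hle V (hmemS V hV)
      have e1 : res (inf_le_left : U ⊓ V ≤ U) s₁ =
          res (inf_le_right : U ⊓ V ≤ V) (res hVU s₁) := (res_comp _ _ _).symm
      have e2 : res (inf_le_left : U ⊓ V ≤ U) s₂ =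
          res (inf_le_right : U ⊓ V ≤ V) (res hVU s₂) := (res_comp _ _ _).symm
      rw [e1, e2, hres ⟨V, hmemS V hV⟩, sub_self]
    exact sub_eq_zero.mp hd
  · intro t
    constructor
    · intro hcompat
      obtain ⟨s₀, hs₀⟩ := myAuxGlue F res res_id res_comp hempty hpair_inj hpair_ker T
        (fun V hV => t ⟨V, hmemS V hV⟩)
        (fun V hV V' hV' => hcompat ⟨V, hmemS V hV⟩ ⟨V', hmemS V' hV'⟩)
      -- restrict s₀ from T.sup id to U (U ≤ T.sup id)
      set s : F U := res hUsup s₀ with hs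
      refine ⟨s, ?_⟩
      intro V
      have hVU : V.1 ≤ U := hle V.1 V.2
      have hd : res hVU s - t V = 0 := by
        refine myAuxInj F res res_id res_comp hempty hpair_inj T V.1
          (le_trans hVU hUsup) _ ?_
        intro W hW
        rw [map_sub]
        have hWU : W ≤ U := hle W (hmemS W hW)
        have hWsup : W ≤ T.sup id := Finset.le_sup (f := id) hW
        have e1 : res (inf_le_left : V.1 ⊓ W ≤ V.1) (res hVU s) =
            res (le_trans inf_le_left hVU) s := res_comp _ _ _
        have e2 : res (le_trans inf_le_left hVU : V.1 ⊓ W ≤ U) (res hUsup s₀) =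
            res (le_trans (le_trans inf_le_left hVU) hUsup) s₀ := res_comp _ _ _
        have e3 : res (inf_le_right : V.1 ⊓ W ≤ W) (res hWsup s₀) =
            res (le_trans inf_le_right hWsup) s₀ := res_comp _ _ _
        have e4 : res hWsup s₀ = t ⟨W, hmemS W hW⟩ := hs₀ W hW hWsup
        have e5 : res (inf_le_left : V.1 ⊓ W ≤ V.1) (res hVU s) =
            res (inf_le_right : V.1 ⊓ W ≤ W) (t ⟨W, hmemS W hW⟩) := by
          rw [e1, hs, e2, ← e4, e3]
        rw [e5]
        have hc := hcompat ⟨W, hmemS W hW⟩ V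
        -- hc : res (t W) - res (t V) = 0 on W ⊓ V; we need on V ⊓ W
        have hle2 : V.1 ⊓ W ≤ W ⊓ V.1 := le_inf inf_le_right inf_le_left
        have := congrArg (res hle2) hc
        rw [map_sub, map_zero, res_comp, res_comp] at this
        -- this : res (t W) - res (t V) = 0 on V ⊓ W
        have : res (inf_le_right : V.1 ⊓ W ≤ W) (t ⟨W, hmemS W hW⟩) -
            res (inf_le_left : V.1 ⊓ W ≤ V.1) (t V) = 0 := this
        exact this
      exact sub_eq_zero.mp hd
    · rintro ⟨s, hs⟩ V' V''
      rw [← hs V', ← hs V'', res_comp, res_comp]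
      exact sub_self _
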